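/- Let J be a nonzero real d×d matrix and G(J) the topological group with underlying space ℝ^d × ℝ and multiplication (v,t)·(u,s) = (v + exp(t·J)·u, t+s). Let N be a discrete normal subgroup of G(J), and let H be a subgroup of G(J) of one of the two forms: H = {(w,0) : w ∈ W} for a linear subspace W ⊆ ℝ^d, or H = {(w + t·S(t·J)·v₀, t) : w ∈ W, t ∈ ℝ} for a linear subspace W ⊆ ℝ^d with J·W ⊆ W and some v₀ ∈ ℝ^d, where S(A) = Σ_{n≥0} Aⁿ/(n+1)!. Then there exists a subgroup B of N such that N is the internal direct product of N ∩ H and B: every element of N can be written uniquely as a product of an element of N ∩ H and an element of B (equivalently, (N ∩ H) ∩ B is trivial and (N ∩ H)·B = N). -/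

import Mathlib

open scoped Matrix
open NormedSpace

noncomputable section

/-- `S(A) = ∑_{n ≥ 0} Aⁿ/(n+1)!`, the power series with `A * S(A) = exp A - 1`. -/
def matS {d : ℕ} (A : Matrix (Fin d) (Fin d) ℝ) : Matrix (Fin d) (Fin d) ℝ :=
  ∑' n : ℕ, (((n + 1).factorial : ℝ))⁻¹ • A ^ n

/-- The almost Abelian group `G(J) = ℝ^d ⋊ ℝ` with multiplication
`(v,t)·(u,s) = (v + exp(tJ)u, t+s)`. -/
@[ext] structure GJ (d : ℕ) (J : Matrix (Fin d) (Fin d) ℝ) where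
  v : Fin d → ℝ
  t : ℝ

namespace GJ

variable {d : ℕ} {J : Matrix (Fin d) (Fin d) ℝ}

lemma exp_smul_add (a b : ℝ) (J : Matrix (Fin d) (Fin d) ℝ) :
    exp ((a + b) • J) = exp (a • J) * exp (b • J) := by
  rw [add_smul]
  exact Matrix.exp_add_of_commute _ _ (((Commute.refl J).smul_left a).smul_right b)

instance : Group (GJ d J) where
  mul p q := ⟨p.v + (exp (p.t • J)).mulVec q.v, p.t + q.t⟩
  one := ⟨0, 0⟩
  inv p := ⟨-(exp ((-p.t) • J)).mulVec p.v, -p.t⟩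
  mul_assoc a b c := by
    ext i
    · show (a.v + (exp (a.t • J)).mulVec b.v + (exp ((a.t + b.t) • J)).mulVec c.v) i = _
      show _ = (a.v + (exp (a.t • J)).mulVec (b.v + (exp (b.t • J)).mulVec c.v)) i
      rw [exp_smul_add, ← Matrix.mulVec_mulVec, Matrix.mulVec_add, add_assoc]
    · exact add_assoc a.t b.t c.t
  one_mul a := by
    ext i
    · show ((0 : Fin d → ℝ) + (exp ((0 : ℝ) • J)).mulVec a.v) i = a.v i
      rw [zero_smul, exp_zero, Matrix.one_mulVec, zero_add]
    · exact zero_add a.t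
  mul_one a := by
    ext i
    · show (a.v + (exp (a.t • J)).mulVec 0) i = a.v i
      rw [Matrix.mulVec_zero, add_zero]
    · exact add_zero a.t
  inv_mul_cancel a := by
    ext i
    · show (-(exp ((-a.t) • J)).mulVec a.v + (exp ((-a.t) • J)).mulVec a.v) i
        = (0 : Fin d → ℝ) i
      rw [neg_add_cancel]
    · exact neg_add_cancel a.t

/-- The topology of `G(J)` is that of the underlying space `ℝ^d × ℝ`. -/
instance : TopologicalSpace (GJ d J) :=
  TopologicalSpace.induced (fun g => (g.v, g.t)) inferInstance

lemma mul_def (p q : GJ d J) :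
    p * q = ⟨p.v + (exp (p.t • J)).mulVec q.v, p.t + q.t⟩ := rfl

end GJ

/-! A discrete normal subgroup `N` of the connected group `G(J)` is central, and multiplication by
a central element adds the coordinates `(v, t)`; so `N` is a discrete subgroup of `ℝ^d × ℝ`, hence
a finitely generated abelian group. `N ∩ H` is pure in `N`: if `nᵏ ∈ H` with `k ≠ 0`, dividing `n`
by an element of `H` with the same `t`-coordinate leaves an element `(w, 0)` with `k • w ∈ W`,
so `w ∈ W`. A pure subgroup of a finitely generated abelian group has a torsion-free, hence free,
quotient, so it is a direct factor. -/
theorem Submodule.exists_isCompl_of_projective_quotient {R M : Type*} [Ring R] [AddCommGroup M]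
    [Module R M] (p : Submodule R M) [Module.Projective R (M ⧸ p)] :
    ∃ q : Submodule R M, IsCompl p q := by
  obtain ⟨s, hs⟩ := p.mkQ.exists_rightInverse_of_surjective p.range_mkQ
  have hidem : IsIdempotentElem (s ∘ₗ p.mkQ) := by
    rw [IsIdempotentElem, Module.End.mul_eq_comp, LinearMap.comp_assoc,
      ← LinearMap.comp_assoc p.mkQ, hs, LinearMap.id_comp]
  have hker : LinearMap.ker (s ∘ₗ p.mkQ) = p := by
    rw [LinearMap.ker_comp_of_ker_eq_bot _ (LinearMap.ker_eq_bot_of_inverse hs), p.ker_mkQ]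
  exact ⟨_, hker ▸ (LinearMap.IsIdempotentElem.isCompl hidem).symm⟩

theorem Submodule.exists_isCompl_of_pure {R M : Type*} [CommRing R] [IsDomain R]
    [IsPrincipalIdealRing R] [AddCommGroup M] [Module R M] [Module.Finite R M]
    (p : Submodule R M) (hp : ∀ (r : R) (x : M), r ≠ 0 → r • x ∈ p → x ∈ p) :
    ∃ q : Submodule R M, IsCompl p q := by
  have : Module.IsTorsionFree R (M ⧸ p) := by
    refine .of_smul_eq_zero fun r x hrx => ?_
    obtain ⟨x, rfl⟩ := p.mkQ_surjective x
    rw [← map_smul, Submodule.mkQ_apply, Submodule.Quotient.mk_eq_zero] at hrx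
    rw [Submodule.mkQ_apply, Submodule.Quotient.mk_eq_zero, or_iff_not_imp_left]
    exact fun hr => hp r x hr hrx
  exact p.exists_isCompl_of_projective_quotient

theorem Subgroup.exists_isComplement'_of_pure {A : Type*} [CommGroup A] [Group.FG A]
    (K : Subgroup A) (hK : ∀ (k : ℤ) (a : A), k ≠ 0 → a ^ k ∈ K → a ∈ K) :
    ∃ B : Subgroup A, IsComplement' K B := by
  have : Module.Finite ℤ (Additive A) := Module.Finite.iff_addGroup_fg.mpr inferInstance
  let e := Subgroup.toAddSubgroup.trans (AddSubgroup.toIntSubmodule (M := Additive A))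
  obtain ⟨q, hq⟩ := (e K).exists_isCompl_of_pure fun k x hk => hK k x.toMul hk
  have hcompl : IsCompl K (e.symm q) := by
    rwa [e.isCompl_iff, e.apply_symm_apply]
  refine ⟨e.symm q, isComplement'_of_disjoint_and_mul_eq_univ hcompl.disjoint ?_⟩
  rw [← mul_normal, hcompl.sup_eq_top, coe_top]

open IsMulCommutative in
theorem Subgroup.exists_unique_mul_of_pure {G : Type*} [Group G] {N K : Subgroup G}
    [IsMulCommutative N] [Group.FG N] (hK : ∀ n ∈ N, ∀ k : ℤ, k ≠ 0 → n ^ k ∈ K → n ∈ K) :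
    ∃ B : Subgroup G, B ≤ N ∧
      ∀ n ∈ N, ∃! q : G × G, q.1 ∈ N ⊓ K ∧ q.2 ∈ B ∧ n = q.1 * q.2 := by
  obtain ⟨B, hB⟩ := (K.subgroupOf N).exists_isComplement'_of_pure
    fun k a hk hak => hK a a.2 k hk hak
  refine ⟨B.map N.subtype, map_subtype_le B, fun n hn => ?_⟩
  obtain ⟨⟨a, b⟩, hab, huniq⟩ := hB.existsUnique ⟨n, hn⟩
  refine ⟨(a, b), ⟨mem_inf.2 ⟨a.1.2, a.2⟩, mem_map_of_mem _ b.2, congrArg Subtype.val hab.symm⟩, ?_⟩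
  rintro ⟨x, _⟩ ⟨hx, ⟨y, hy, rfl⟩, hxy⟩
  have := huniq (⟨⟨x, (mem_inf.1 hx).1⟩, (mem_inf.1 hx).2⟩, ⟨y, hy⟩) (Subtype.ext hxy.symm)
  simp only [Prod.ext_iff, Subtype.ext_iff] at this
  exact Prod.ext this.1 this.2

theorem Subgroup.Normal.le_center_of_discreteTopology {G : Type*} [Group G] [TopologicalSpace G]
    [IsTopologicalGroup G] [ConnectedSpace G] {N : Subgroup G} (hN : N.Normal)
    [DiscreteTopology N] : N ≤ Subgroup.center G := by
  intro n hn
  let conj : G → N := fun g => ⟨g * n * g⁻¹, hN.conj_mem n hn g⟩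
  have hconj : Continuous conj := by fun_prop
  refine Subgroup.mem_center_iff.2 fun g => ?_
  have : g * n * g⁻¹ = 1 * n * 1⁻¹ :=
    congrArg Subtype.val (PreconnectedSpace.constant inferInstance hconj)
  rw [one_mul, inv_one, mul_one] at this
  exact mul_inv_eq_iff_eq_mul.1 this

namespace GJ

variable {d : ℕ} {J : Matrix (Fin d) (Fin d) ℝ}

@[simp] lemma mul_v (p q : GJ d J) : (p * q).v = p.v + exp (p.t • J) *ᵥ q.v := rfl
@[simp] lemma mul_t (p q : GJ d J) : (p * q).t = p.t + q.t := rfl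
@[simp] lemma one_v : (1 : GJ d J).v = 0 := rfl
@[simp] lemma one_t : (1 : GJ d J).t = 0 := rfl
@[simp] lemma inv_v (p : GJ d J) : p⁻¹.v = -(exp ((-p.t) • J) *ᵥ p.v) := rfl
@[simp] lemma inv_t (p : GJ d J) : p⁻¹.t = -p.t := rfl

lemma continuous_exp_smul : Continuous fun s : ℝ => exp (s • J) := by
  -- matrices carry no global norm; any normed-algebra structure gives access to `exp_continuous`
  let _ : NormedRing (Matrix (Fin d) (Fin d) ℝ) := Matrix.linftyOpNormedRing
  let _ : NormedAlgebra ℝ (Matrix (Fin d) (Fin d) ℝ) := Matrix.linftyOpNormedAlgebra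
  let _ : NormedAlgebra ℚ (Matrix (Fin d) (Fin d) ℝ) := NormedAlgebra.restrictScalars ℚ ℝ _
  fun_prop

@[fun_prop] lemma continuous_v : Continuous (GJ.v : GJ d J → Fin d → ℝ) :=
  continuous_fst.comp (continuous_induced_dom (f := fun g : GJ d J => (g.v, g.t)))

@[fun_prop] lemma continuous_t : Continuous (GJ.t : GJ d J → ℝ) :=
  continuous_snd.comp (continuous_induced_dom (f := fun g : GJ d J => (g.v, g.t)))

@[fun_prop] lemma continuous_mk {X : Type*} [TopologicalSpace X] {f : X → Fin d → ℝ} {g : X → ℝ}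
    (hf : Continuous f) (hg : Continuous g) : Continuous fun x => (⟨f x, g x⟩ : GJ d J) :=
  continuous_induced_rng.2 (hf.prodMk hg)

@[fun_prop] lemma continuous_exp_smul_mulVec {X : Type*} [TopologicalSpace X] {s : X → ℝ}
    {u : X → Fin d → ℝ} (hs : Continuous s) (hu : Continuous u) :
    Continuous fun x => exp (s x • J) *ᵥ u x :=
  (continuous_exp_smul.comp hs).matrix_mulVec hu

instance : IsTopologicalGroup (GJ d J) where
  continuous_mul := by
    show Continuous fun p : GJ d J × GJ d J =>
      (⟨p.1.v + exp (p.1.t • J) *ᵥ p.2.v, p.1.t + p.2.t⟩ : GJ d J)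
    exact continuous_mk (by fun_prop) (by fun_prop)
  continuous_inv := by
    show Continuous fun p : GJ d J => (⟨-(exp ((-p.t) • J) *ᵥ p.v), -p.t⟩ : GJ d J)
    exact continuous_mk (by fun_prop) (by fun_prop)

instance : ConnectedSpace (GJ d J) :=
  (show Function.Surjective fun p : (Fin d → ℝ) × ℝ => (⟨p.1, p.2⟩ : GJ d J) from
    fun g => ⟨(g.v, g.t), rfl⟩).connectedSpace
    (continuous_mk (J := J) continuous_fst continuous_snd)

def tHom : GJ d J →* Multiplicative ℝ where
  toFun g := .ofAdd g.t
  map_one' := rfl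
  map_mul' _ _ := rfl

lemma zpow_t (g : GJ d J) (k : ℤ) : (g ^ k).t = k * g.t := by
  rw [show (g ^ k).t = (tHom (g ^ k)).toAdd from rfl, map_zpow, toAdd_zpow, zsmul_eq_mul]
  rfl

def ofVec : Multiplicative (Fin d → ℝ) →* GJ d J where
  toFun v := ⟨v.toAdd, 0⟩
  map_one' := rfl
  map_mul' v u := by ext <;> simp

lemma mk_zero_zpow (v : Fin d → ℝ) (k : ℤ) : (⟨v, 0⟩ : GJ d J) ^ k = ⟨k • v, 0⟩ :=
  (map_zpow ofVec (.ofAdd v) k).symm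

lemma exp_smul_mulVec_of_mem_center {n : GJ d J} (hn : n ∈ Subgroup.center (GJ d J))
    (u : Fin d → ℝ) : exp (n.t • J) *ᵥ u = u := by
  have h := congrArg GJ.v (Subgroup.mem_center_iff.1 hn ⟨u, 0⟩)
  simp only [mul_v, zero_smul, exp_zero, Matrix.one_mulVec] at h
  exact (add_left_cancel ((add_comm n.v u).trans h)).symm

lemma mul_v_of_mem_center {n : GJ d J} (hn : n ∈ Subgroup.center (GJ d J)) (g : GJ d J) :
    (n * g).v = n.v + g.v := by
  rw [mul_v, exp_smul_mulVec_of_mem_center hn]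

lemma mk_add_of_mem_center {v u : Fin d → ℝ} {s t : ℝ}
    (h : (⟨v, s⟩ : GJ d J) ∈ Subgroup.center (GJ d J)) :
    (⟨v + u, s + t⟩ : GJ d J) = ⟨v, s⟩ * ⟨u, t⟩ :=
  GJ.ext (mul_v_of_mem_center h ⟨u, t⟩).symm rfl

def coordinates (N : Subgroup (GJ d J)) (hN : N ≤ Subgroup.center (GJ d J)) :
    AddSubgroup ((Fin d → ℝ) × ℝ) where
  carrier := {p | (⟨p.1, p.2⟩ : GJ d J) ∈ N}
  add_mem' {p q} hp hq := by
    show (⟨p.1 + q.1, p.2 + q.2⟩ : GJ d J) ∈ N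
    rw [mk_add_of_mem_center (hN hp)]
    exact N.mul_mem hp hq
  zero_mem' := N.one_mem
  neg_mem' {p} hp := by
    have h : (⟨p.1, p.2⟩ : GJ d J) * ⟨-p.1, -p.2⟩ = 1 := by
      rw [← mk_add_of_mem_center (hN hp)]; ext <;> simp
    simpa [eq_inv_of_mul_eq_one_right h] using N.inv_mem hp

theorem fg_of_le_center {N : Subgroup (GJ d J)} (hN : N ≤ Subgroup.center (GJ d J))
    [DiscreteTopology N] : Group.FG N := by
  let L := coordinates N hN
  have : DiscreteTopology L.toIntSubmodule :=
    DiscreteTopology.preimage_of_continuous_injective (N : Set (GJ d J))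
      (continuous_mk continuous_fst continuous_snd)
      fun p q h => Prod.ext (congrArg GJ.v h) (congrArg GJ.t h)
  have : AddGroup.FG L :=
    Module.Finite.iff_addGroup_fg.mp (inferInstance : Module.Finite ℤ L.toIntSubmodule)
  let f : Multiplicative L →* N :=
    { toFun p := ⟨⟨p.toAdd.1.1, p.toAdd.1.2⟩, p.toAdd.2⟩
      map_one' := rfl
      map_mul' p q := Subtype.ext (mk_add_of_mem_center (hN p.toAdd.2)) }
  exact Group.fg_of_surjective (f := f) fun g => ⟨.ofAdd ⟨(g.1.v, g.1.t), g.2⟩, rfl⟩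

theorem mem_of_zpow_mem_of_mem_center {H : Subgroup (GJ d J)} {W : Submodule ℝ (Fin d → ℝ)}
    (hW : ∀ v, (⟨v, 0⟩ : GJ d J) ∈ H ↔ v ∈ W) {n h : GJ d J}
    (hn : n ∈ Subgroup.center (GJ d J)) (hh : h ∈ H) (hht : h.t = n.t) {k : ℤ} (hk : k ≠ 0)
    (hnk : n ^ k ∈ H) : n ∈ H := by
  set m := n * h⁻¹
  have hm : m = ⟨m.v, 0⟩ := GJ.ext rfl (by simp [m, hht])
  have hmk : m ^ k ∈ H := by
    have hc : Commute n h⁻¹ := (Subgroup.mem_center_iff.1 hn h⁻¹).symm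
    rw [hc.mul_zpow]
    exact H.mul_mem hnk (H.zpow_mem (H.inv_mem hh) k)
  rw [hm, mk_zero_zpow, hW, ← Int.cast_smul_eq_zsmul ℝ] at hmk
  have hmH : m ∈ H := hm ▸ (hW _).2 ((W.smul_mem_iff (Int.cast_ne_zero.2 hk)).1 hmk)
  simpa [m] using H.mul_mem hmH hh

theorem mem_of_zpow_mem {H : Subgroup (GJ d J)}
    (hH : (∃ W : Submodule ℝ (Fin d → ℝ),
        (H : Set (GJ d J)) = {g : GJ d J | g.v ∈ W ∧ g.t = 0}) ∨
      (∃ W : Submodule ℝ (Fin d → ℝ), (∀ w ∈ W, J.mulVec w ∈ W) ∧ ∃ v₀ : Fin d → ℝ,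
        (H : Set (GJ d J)) =
          {g : GJ d J | ∃ w ∈ W, ∃ t : ℝ, g = ⟨w + t • (matS (t • J)).mulVec v₀, t⟩}))
    {n : GJ d J} (hn : n ∈ Subgroup.center (GJ d J)) {k : ℤ} (hk : k ≠ 0) (hnk : n ^ k ∈ H) :
    n ∈ H := by
  rcases hH with ⟨W, hW⟩ | ⟨W, -, v₀, hW⟩
  · have hnt : n.t = 0 := by
      have h := ((Set.ext_iff.1 hW _).1 hnk).2
      rw [zpow_t] at h
      exact (mul_eq_zero.1 h).resolve_left (Int.cast_ne_zero.2 hk)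
    refine mem_of_zpow_mem_of_mem_center (W := W) (fun v => ?_) hn H.one_mem hnt.symm hk hnk
    rw [← SetLike.mem_coe, hW]
    simp
  · refine mem_of_zpow_mem_of_mem_center (W := W) (fun v => ?_) hn
      (h := ⟨n.t • matS (n.t • J) *ᵥ v₀, n.t⟩) ?_ rfl hk hnk
    · rw [← SetLike.mem_coe, hW]
      simp
    · rw [← SetLike.mem_coe, hW]
      exact ⟨0, W.zero_mem, n.t, by simp⟩

end GJ

theorem GJ.discrete_subgroup_splits_along_connected_general (d : ℕ) (J : Matrix (Fin d) (Fin d) ℝ)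
    (N : Subgroup (GJ d J)) (hnorm : N.Normal) (hdisc : DiscreteTopology N)
    (H : Subgroup (GJ d J))
    (hH : (∃ W : Submodule ℝ (Fin d → ℝ),
        (H : Set (GJ d J)) = {g : GJ d J | g.v ∈ W ∧ g.t = 0}) ∨
      (∃ W : Submodule ℝ (Fin d → ℝ), (∀ w ∈ W, J.mulVec w ∈ W) ∧ ∃ v₀ : Fin d → ℝ,
        (H : Set (GJ d J)) =
          {g : GJ d J | ∃ w ∈ W, ∃ t : ℝ, g = ⟨w + t • (matS (t • J)).mulVec v₀, t⟩})) :
    ∃ B : Subgroup (GJ d J), B ≤ N ∧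
      ∀ n ∈ N, ∃! q : GJ d J × GJ d J, q.1 ∈ N ⊓ H ∧ q.2 ∈ B ∧ n = q.1 * q.2 := by
  have hcentral : N ≤ Subgroup.center (GJ d J) := hnorm.le_center_of_discreteTopology
  have : IsMulCommutative N := .of_setLike_mul_comm fun a ha b _ =>
    (Subgroup.mem_center_iff.1 (hcentral ha) b).symm
  have : Group.FG N := fg_of_le_center hcentral
  exact Subgroup.exists_unique_mul_of_pure fun n hn k hk hnk =>
    mem_of_zpow_mem hH (hcentral hn) hk hnk

/-- For a discrete normal subgroup `N` of `G(J)` and a connected subgroup `H` of `G(J)` (of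
either of the two canonical forms), there is a subgroup `B ≤ N` such that `N` is the internal
direct product of `N ∩ H` and `B`. -/
theorem GJ.discrete_subgroup_splits_along_connected (d : ℕ) (J : Matrix (Fin d) (Fin d) ℝ)
    (hJ : J ≠ 0) (N : Subgroup (GJ d J)) (hnorm : N.Normal) (hdisc : DiscreteTopology N)
    (H : Subgroup (GJ d J))
    (hH : (∃ W : Submodule ℝ (Fin d → ℝ),
        (H : Set (GJ d J)) = {g : GJ d J | g.v ∈ W ∧ g.t = 0}) ∨
      (∃ W : Submodule ℝ (Fin d → ℝ), (∀ w ∈ W, J.mulVec w ∈ W) ∧ ∃ v₀ : Fin d → ℝ,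
        (H : Set (GJ d J)) =
          {g : GJ d J | ∃ w ∈ W, ∃ t : ℝ, g = ⟨w + t • (matS (t • J)).mulVec v₀, t⟩})) :
    ∃ B : Subgroup (GJ d J), B ≤ N ∧
      ∀ n ∈ N, ∃! q : GJ d J × GJ d J, q.1 ∈ N ⊓ H ∧ q.2 ∈ B ∧ n = q.1 * q.2 :=
  GJ.discrete_subgroup_splits_along_connected_general d J N hnorm hdisc H hH
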